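/- Let 0 < a < b, λ ∈ [0,1], q > 1 and 1/p + 1/q = 1. With H = 2ab/(a+b), G = √(ab), and A(x,y) = (x+y)/2, the following inequality holds: |(1−λ)·H² + λ·A(a²,b²) − G²| ≤ ( ab(b−a)·C₄(λ,p)^{1/p} / (2·[(1−q)(1−2q)(b−a)²]^{1/q}) )·{ ( C₅(q;a,b)·a^q + C₆(q;a,b)·b^q )^{1/q} + ( C₆(q;b,a)·a^q + C₅(q;b,a)·b^q )^{1/q} }. -/

import Mathlib

/-!
Parametrize `[a, b]` harmonically by `x(t) = ab / u(t)` with `u(t) = (1 - t) b + t a`, and put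
`g = x²`. Then `g(0) = a²`, `g(1) = b²`, `g(1/2) = H²` and `∫₀¹ g = ab = G²`, so the left-hand side
is `(1 - λ) g(1/2) + λ (g(0) + g(1)) / 2 - ∫₀¹ g`. Integrating by parts against the kernel `t - λ/2`
on `[0, 1/2]` and `t - (1 - λ/2)` on `[1/2, 1]` turns it into `∫ kernel · g'`, and Hölder's
inequality splits off the `p`-th moment of the kernel, which is `C₄(λ, p) / 2^(p+1)`. Next,
`|g'(t)|^q = (2ab(b - a))^q x(t)^q u(t)^(-2q)` and `x(t)^q ≤ (1 - t) a^q + t b^q` (harmonic mean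
below arithmetic mean, then convexity of `x^q`). The integrals of the resulting majorant over
the two halves are `C₆(q; b, a) a^q + C₅(q; b, a) b^q` and `C₅(q; a, b) a^q + C₆(q; a, b) b^q`, up
to the factor `2 (1 - q)(1 - 2q)(b - a)²`.
-/

open MeasureTheory Set

/-- `C₄(λ, p)` from Theorem 2.4. -/
noncomputable def C4 (lam p : ℝ) : ℝ := (lam ^ (p + 1) + (1 - lam) ^ (p + 1)) / (p + 1)

/-- `C₅(q; u, ϑ)` from Theorem 2.4. -/
noncomputable def C5 (q u v : ℝ) : ℝ :=
  ((u + v) / 2) ^ (1 - 2 * q) * ((v - 3 * u) / 2 - q * (v - u)) + u ^ (2 - 2 * q)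

/-- `C₆(q; u, ϑ)` from Theorem 2.4. -/
noncomputable def C6 (q u v : ℝ) : ℝ :=
  ((u + v) / 2) ^ (1 - 2 * q) * ((3 * v - u) / 2 - q * (v - u))
    + u ^ (1 - 2 * q) * (u - 2 * v + 2 * q * (v - u))

open intervalIntegral

theorem ContinuousOn.memLp_Ioc {f : ℝ → ℝ} {lo hi : ℝ} (hf : ContinuousOn f (Icc lo hi))
    (r : ENNReal) : MemLp f r (volume.restrict (Ioc lo hi)) := by
  obtain ⟨C, hC⟩ := isCompact_Icc.exists_bound_of_continuousOn hf
  refine MemLp.of_bound ((hf.mono Ioc_subset_Icc_self).aestronglyMeasurable measurableSet_Ioc) C ?_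
  exact (ae_restrict_iff' measurableSet_Ioc).2
    (ae_of_all _ fun x hx => hC x (Ioc_subset_Icc_self hx))

theorem abs_intervalIntegral_mul_le_Lp_mul_Lq {f g : ℝ → ℝ} {lo hi p q : ℝ} (hle : lo ≤ hi)
    (hpq : p.HolderConjugate q) (hf : ContinuousOn f (Icc lo hi))
    (hg : ContinuousOn g (Icc lo hi)) :
    |∫ t in lo..hi, f t * g t| ≤
      (∫ t in lo..hi, |f t| ^ p) ^ (1 / p) * (∫ t in lo..hi, |g t| ^ q) ^ (1 / q) := by
  simp only [integral_of_le hle]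
  calc |∫ t in Ioc lo hi, f t * g t|
      ≤ ∫ t in Ioc lo hi, ‖f t‖ * ‖g t‖ := by
        simpa only [Real.norm_eq_abs, abs_mul] using
          norm_integral_le_integral_norm (μ := volume.restrict (Ioc lo hi)) (fun t => f t * g t)
    _ ≤ _ := integral_mul_norm_le_Lp_mul_Lq hpq (hf.memLp_Ioc _) (hg.memLp_Ioc _)

theorem integral_abs_sub_rpow {lo hi c p : ℝ} (hp : 0 ≤ p) (hlo : lo ≤ c) (hhi : c ≤ hi) :
    ∫ t in lo..hi, |t - c| ^ p = ((c - lo) ^ (p + 1) + (hi - c) ^ (p + 1)) / (p + 1) := by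
  have hint : ∀ x y : ℝ, IntervalIntegrable (fun t => |t| ^ p) volume x y := fun x y =>
    (continuous_abs.rpow_const fun _ => Or.inr hp).intervalIntegrable x y
  have hpos : ∀ h, 0 ≤ h → ∫ t in (0:ℝ)..h, |t| ^ p = h ^ (p + 1) / (p + 1) := by
    intro h hh
    rw [integral_congr (g := fun t => t ^ p) fun t ht => ?_, integral_rpow (Or.inl (by linarith)),
      Real.zero_rpow (by linarith), sub_zero]
    rw [uIcc_of_le hh] at ht
    simp only [abs_of_nonneg ht.1]
  have hneg : ∫ t in lo - c..0, |t| ^ p = (c - lo) ^ (p + 1) / (p + 1) := by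
    have := integral_comp_neg (a := 0) (b := c - lo) (fun t => |t| ^ p)
    simp only [abs_neg, neg_sub, neg_zero] at this
    rw [← this, hpos _ (by linarith)]
  rw [integral_comp_sub_right (fun t => |t| ^ p), ← integral_add_adjacent_intervals (b := 0)
    (hint _ _) (hint _ _), hpos _ (by linarith), hneg, add_div]

theorem midpoint_trapezoid_sub_integral_eq {g g' : ℝ → ℝ} (c : ℝ)
    (hg : ∀ t ∈ Icc (0:ℝ) 1, HasDerivAt g (g' t) t) (hg' : IntervalIntegrable g' volume 0 1) :
    (1 - 2 * c) * g (1 / 2) + c * (g 0 + g 1) - ∫ t in (0:ℝ)..1, g t =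
      (∫ t in (0:ℝ)..1 / 2, (t - c) * g' t) + ∫ t in (1 / 2 : ℝ)..1, (t - (1 - c)) * g' t := by
  have hcont : ContinuousOn g (Icc 0 1) := fun t ht => (hg t ht).continuousAt.continuousWithinAt
  have hsub₁ : uIcc (0:ℝ) (1 / 2) ⊆ uIcc 0 1 := uIcc_subset_uIcc (by simp) (by simp; norm_num)
  have hsub₂ : uIcc (1 / 2 : ℝ) 1 ⊆ uIcc 0 1 := uIcc_subset_uIcc (by simp; norm_num) (by simp)
  rw [← uIcc_of_le zero_le_one] at hg hcont
  have hlin : ∀ d t : ℝ, HasDerivAt (fun t => t - d) 1 t := fun d t => (hasDerivAt_id t).sub_const d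
  rw [intervalIntegral.integral_mul_deriv_eq_deriv_mul (fun t _ => hlin c t)
      (fun t ht => hg t (hsub₁ ht)) intervalIntegrable_const (hg'.mono_set hsub₁),
    intervalIntegral.integral_mul_deriv_eq_deriv_mul (fun t _ => hlin (1 - c) t)
      (fun t ht => hg t (hsub₂ ht)) intervalIntegrable_const (hg'.mono_set hsub₂),
    ← integral_add_adjacent_intervals (b := 1 / 2) ((hcont.mono hsub₁).intervalIntegrable)
      ((hcont.mono hsub₂).intervalIntegrable)]
  simp only [one_mul]
  ring

theorem abs_midpoint_trapezoid_sub_integral_le {g g' : ℝ → ℝ} {c p q : ℝ}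
    (hpq : p.HolderConjugate q) (hc₀ : 0 ≤ c) (hc : c ≤ 1 / 2)
    (hg : ∀ t ∈ Icc (0:ℝ) 1, HasDerivAt g (g' t) t) (hg' : ContinuousOn g' (Icc 0 1)) :
    |(1 - 2 * c) * g (1 / 2) + c * (g 0 + g 1) - ∫ t in (0:ℝ)..1, g t| ≤
      ((c ^ (p + 1) + (1 / 2 - c) ^ (p + 1)) / (p + 1)) ^ (1 / p) *
        ((∫ t in (0:ℝ)..1 / 2, |g' t| ^ q) ^ (1 / q) +
          (∫ t in (1 / 2 : ℝ)..1, |g' t| ^ q) ^ (1 / q)) := by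
  have hkernel₁ : ∫ t in (0:ℝ)..1 / 2, |t - c| ^ p =
      (c ^ (p + 1) + (1 / 2 - c) ^ (p + 1)) / (p + 1) := by
    rw [integral_abs_sub_rpow hpq.nonneg hc₀ hc, sub_zero]
  have hkernel₂ : ∫ t in (1 / 2 : ℝ)..1, |t - (1 - c)| ^ p =
      (c ^ (p + 1) + (1 / 2 - c) ^ (p + 1)) / (p + 1) := by
    rw [integral_abs_sub_rpow hpq.nonneg (by linarith) (by linarith), add_comm]
    ring_nf
  have hHolder₁ := abs_intervalIntegral_mul_le_Lp_mul_Lq (lo := 0) (hi := 1 / 2) (by norm_num) hpq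
    (f := fun t => t - c) (by fun_prop) (hg'.mono (Icc_subset_Icc le_rfl (by norm_num)))
  have hHolder₂ := abs_intervalIntegral_mul_le_Lp_mul_Lq (lo := 1 / 2) (hi := 1) (by norm_num) hpq
    (f := fun t => t - (1 - c)) (by fun_prop) (hg'.mono (Icc_subset_Icc (by norm_num) le_rfl))
  rw [hkernel₁] at hHolder₁
  rw [hkernel₂] at hHolder₂
  rw [midpoint_trapezoid_sub_integral_eq c hg (hg'.intervalIntegrable_of_Icc zero_le_one), mul_add]
  exact (abs_add_le _ _).trans (add_le_add hHolder₁ hHolder₂)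

/-- The point of `[a, b]` with `1 / x = (1 - t) / a + t / b`. -/
noncomputable def harmonicPath (a b t : ℝ) : ℝ := a * b / (b - (b - a) * t)

noncomputable def harmonicPathDeriv (a b t : ℝ) : ℝ := a * b * (b - a) / (b - (b - a) * t) ^ 2

noncomputable def harmonicWeight (a b q t : ℝ) : ℝ :=
  ((1 - t) * a ^ q + t * b ^ q) * (b - (b - a) * t) ^ (-(2 * q))

section HarmonicPath

variable {a b q t : ℝ}

theorem harmonicPath_zero (hb : b ≠ 0) : harmonicPath a b 0 = a := by
  rw [harmonicPath, mul_zero, sub_zero, mul_div_cancel_right₀ a hb]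

theorem harmonicPath_one (ha : a ≠ 0) : harmonicPath a b 1 = b := by
  rw [harmonicPath, mul_one, sub_sub_cancel, mul_div_cancel_left₀ b ha]

theorem harmonicPath_half : harmonicPath a b (1 / 2) = 2 * a * b / (a + b) := by
  rw [harmonicPath, show b - (b - a) * (1 / 2) = (a + b) / 2 by ring, div_div_eq_mul_div]
  ring

theorem harmonicPath_denom_pos (ha : 0 < a) (hb : 0 < b) (ht : t ∈ Icc (0:ℝ) 1) :
    0 < b - (b - a) * t := by
  rcases le_total a b with h | h
  · nlinarith [mul_nonneg (sub_nonneg.2 ht.2) (sub_nonneg.2 h)]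
  · nlinarith [mul_nonneg ht.1 (sub_nonneg.2 h)]

theorem harmonicPath_nonneg (ha : 0 < a) (hb : 0 < b) (ht : t ∈ Icc (0:ℝ) 1) :
    0 ≤ harmonicPath a b t :=
  div_nonneg (by positivity) (harmonicPath_denom_pos ha hb ht).le

theorem hasDerivAt_harmonicPath_denom (a b t : ℝ) :
    HasDerivAt (fun t => b - (b - a) * t) (-(b - a)) t := by
  simpa using ((hasDerivAt_id t).const_mul (b - a)).const_sub b

theorem hasDerivAt_harmonicPath (ht : b - (b - a) * t ≠ 0) :
    HasDerivAt (harmonicPath a b) (harmonicPathDeriv a b t) t :=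
  ((hasDerivAt_const t (a * b)).div (hasDerivAt_harmonicPath_denom a b t) ht).congr_deriv
    (by rw [harmonicPathDeriv]; field_simp; ring)

theorem continuousOn_harmonicPath (ha : 0 < a) (hb : 0 < b) :
    ContinuousOn (harmonicPath a b) (Icc 0 1) := fun _ ht =>
  (hasDerivAt_harmonicPath (harmonicPath_denom_pos ha hb ht).ne').continuousAt.continuousWithinAt

theorem continuousOn_harmonicPathDeriv (ha : 0 < a) (hb : 0 < b) :
    ContinuousOn (harmonicPathDeriv a b) (Icc 0 1) :=
  continuousOn_const.div (by fun_prop) fun _ ht =>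
    pow_ne_zero 2 (harmonicPath_denom_pos ha hb ht).ne'

theorem continuousOn_harmonicWeight (ha : 0 < a) (hb : 0 < b) :
    ContinuousOn (harmonicWeight a b q) (Icc 0 1) :=
  ContinuousOn.mul (by fun_prop) (ContinuousOn.rpow_const (by fun_prop) fun t ht =>
    Or.inl (harmonicPath_denom_pos ha hb ht).ne')

theorem harmonicWeight_nonneg (ha : 0 < a) (hb : 0 < b) (ht : t ∈ Icc (0:ℝ) 1) :
    0 ≤ harmonicWeight a b q t := by
  have := sub_nonneg.2 ht.2
  have := ht.1
  have := harmonicPath_denom_pos ha hb ht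
  unfold harmonicWeight
  positivity

theorem integral_harmonicWeight_nonneg (ha : 0 < a) (hb : 0 < b) {lo hi : ℝ} (hlo : 0 ≤ lo)
    (hlh : lo ≤ hi) (hhi : hi ≤ 1) : 0 ≤ ∫ t in lo..hi, harmonicWeight a b q t :=
  intervalIntegral.integral_nonneg hlh fun _ ht =>
    harmonicWeight_nonneg ha hb (Icc_subset_Icc hlo hhi ht)

theorem harmonicPath_le (ha : 0 < a) (hb : 0 < b) (ht : t ∈ Icc (0:ℝ) 1) :
    harmonicPath a b t ≤ (1 - t) * a + t * b := by
  rw [harmonicPath, div_le_iff₀ (harmonicPath_denom_pos ha hb ht)]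
  nlinarith [mul_nonneg (mul_nonneg ht.1 (sub_nonneg.2 ht.2)) (sq_nonneg (b - a))]

theorem harmonicPath_rpow_le (hq : 1 ≤ q) (ha : 0 < a) (hb : 0 < b) (ht : t ∈ Icc (0:ℝ) 1) :
    harmonicPath a b t ^ q ≤ (1 - t) * a ^ q + t * b ^ q := by
  calc harmonicPath a b t ^ q ≤ ((1 - t) * a + t * b) ^ q :=
        Real.rpow_le_rpow (harmonicPath_nonneg ha hb ht) (harmonicPath_le ha hb ht) (by linarith)
    _ ≤ (1 - t) * a ^ q + t * b ^ q := by
        simpa only [smul_eq_mul] using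
          (convexOn_rpow hq).2 ha.le hb.le (sub_nonneg.2 ht.2) ht.1 (by ring)

theorem integral_harmonicPath_sq (ha : 0 < a) (hb : 0 < b) :
    ∫ t in (0:ℝ)..1, harmonicPath a b t ^ 2 = a * b := by
  have hF : ∀ t ∈ uIcc (0:ℝ) 1, HasDerivAt (fun t => a ^ 2 * b * t / (b - (b - a) * t))
      (harmonicPath a b t ^ 2) t := by
    intro t ht
    rw [uIcc_of_le zero_le_one] at ht
    have hu := harmonicPath_denom_pos ha hb ht
    refine (((hasDerivAt_id t).const_mul (a ^ 2 * b)).div (hasDerivAt_harmonicPath_denom a b t)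
      hu.ne').congr_deriv ?_
    simp only [harmonicPath, id]
    field_simp
    ring
  have hcont : ContinuousOn (fun t => harmonicPath a b t ^ 2) (uIcc 0 1) := by
    rw [uIcc_of_le zero_le_one]
    exact (continuousOn_harmonicPath ha hb).pow 2
  rw [integral_eq_sub_of_hasDerivAt hF hcont.intervalIntegrable]
  simp only [mul_one, mul_zero, zero_div, sub_zero, sub_sub_cancel]
  field_simp

theorem integral_harmonicWeight (ha : 0 < a) (hb : 0 < b) (hab : a ≠ b) (hq : 1 < q) {lo hi : ℝ}
    (hlo : 0 ≤ lo) (hlh : lo ≤ hi) (hhi : hi ≤ 1) :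
    let F := fun t => ((b ^ q - a ^ q) * (b - (b - a) * t) ^ (2 - 2 * q) / (2 - 2 * q)
        - (b * b ^ q - a * a ^ q) * (b - (b - a) * t) ^ (1 - 2 * q) / (1 - 2 * q)) / (b - a) ^ 2
    ∫ t in lo..hi, harmonicWeight a b q t = F hi - F lo := by
  intro F
  have hsub : uIcc lo hi ⊆ Icc 0 1 := by
    rw [uIcc_of_le hlh]; exact Icc_subset_Icc hlo hhi
  apply integral_eq_sub_of_hasDerivAt
  · intro t ht
    have hu := harmonicPath_denom_pos ha hb (hsub ht)
    have hpow : ∀ r, HasDerivAt (fun t => (b - (b - a) * t) ^ r)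
        (r * (b - (b - a) * t) ^ (r - 1) * (-(b - a))) t := fun r =>
      ((Real.hasDerivAt_rpow_const (p := r) (Or.inl hu.ne')).comp t
        (hasDerivAt_harmonicPath_denom a b t) :)
    refine (((((hpow _).const_mul (b ^ q - a ^ q)).div_const _).sub
      (((hpow _).const_mul _).div_const _)).div_const _).congr_deriv ?_
    have h2q : (2 - 2 * q) ≠ 0 := by linarith
    have h1q : (1 - 2 * q) ≠ 0 := by linarith
    have h1q' : (1 - q) ≠ 0 := by linarith
    have hba : b - a ≠ 0 := sub_ne_zero.2 hab.symm
    have e1 : (b - (b - a) * t) ^ (2 - 2 * q - 1) =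
        (b - (b - a) * t) * (b - (b - a) * t) ^ (-(2 * q)) := by
      rw [← Real.rpow_one_add' hu.le (by linarith)]
      ring_nf
    have e2 : (b - (b - a) * t) ^ (1 - 2 * q - 1) = (b - (b - a) * t) ^ (-(2 * q)) := by
      ring_nf
    rw [e1, e2, harmonicWeight]
    field_simp
    ring
  · exact ((continuousOn_harmonicWeight ha hb).mono hsub).intervalIntegrable

theorem rpow_two_sub_two_mul {x : ℝ} (hx : 0 < x) (q : ℝ) :
    x ^ (2 - 2 * q) = x * x ^ (1 - 2 * q) := by
  rw [show 2 - 2 * q = 1 + (1 - 2 * q) by ring, Real.rpow_add hx, Real.rpow_one]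

theorem C6_mul_add_C5_mul_eq_integral (ha : 0 < a) (hb : 0 < b) (hab : a ≠ b) (hq : 1 < q) :
    C6 q b a * a ^ q + C5 q b a * b ^ q =
      2 * ((1 - q) * (1 - 2 * q) * (b - a) ^ 2) * ∫ t in (0:ℝ)..1 / 2, harmonicWeight a b q t := by
  have h2q : (2 - 2 * q) ≠ 0 := by linarith
  have h1q : (1 - 2 * q) ≠ 0 := by linarith
  have h1q' : (1 - q) ≠ 0 := by linarith
  have hba : b - a ≠ 0 := sub_ne_zero.2 hab.symm
  rw [integral_harmonicWeight ha hb hab hq le_rfl (by norm_num) (by norm_num)]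
  beta_reduce
  rw [show b - (b - a) * (1 / 2 : ℝ) = (a + b) / 2 by ring, show b - (b - a) * (0 : ℝ) = b by ring,
    C5, C6, show (b + a) / 2 = (a + b) / 2 by ring,
    rpow_two_sub_two_mul (show 0 < (a + b) / 2 by positivity), rpow_two_sub_two_mul hb]
  field_simp
  ring

theorem C5_mul_add_C6_mul_eq_integral (ha : 0 < a) (hb : 0 < b) (hab : a ≠ b) (hq : 1 < q) :
    C5 q a b * a ^ q + C6 q a b * b ^ q =
      2 * ((1 - q) * (1 - 2 * q) * (b - a) ^ 2) *
        ∫ t in (1 / 2 : ℝ)..1, harmonicWeight a b q t := by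
  have h2q : (2 - 2 * q) ≠ 0 := by linarith
  have h1q : (1 - 2 * q) ≠ 0 := by linarith
  have h1q' : (1 - q) ≠ 0 := by linarith
  have hba : b - a ≠ 0 := sub_ne_zero.2 hab.symm
  rw [integral_harmonicWeight ha hb hab hq (by norm_num) (by norm_num) le_rfl]
  beta_reduce
  rw [show b - (b - a) * (1 / 2 : ℝ) = (a + b) / 2 by ring, show b - (b - a) * (1 : ℝ) = a by ring,
    C5, C6, rpow_two_sub_two_mul (show 0 < (a + b) / 2 by positivity), rpow_two_sub_two_mul ha]
  field_simp
  ring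

theorem hasDerivAt_harmonicPath_sq (ha : 0 < a) (hb : 0 < b) (ht : t ∈ Icc (0:ℝ) 1) :
    HasDerivAt (fun t => harmonicPath a b t ^ 2)
      (2 * harmonicPath a b t * harmonicPathDeriv a b t) t :=
  ((hasDerivAt_harmonicPath (harmonicPath_denom_pos ha hb ht).ne').pow 2).congr_deriv (by ring)

theorem continuousOn_deriv_harmonicPath_sq (ha : 0 < a) (hb : 0 < b) :
    ContinuousOn (fun t => 2 * harmonicPath a b t * harmonicPathDeriv a b t) (Icc 0 1) :=
  (continuousOn_const.mul (continuousOn_harmonicPath ha hb)).mul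
    (continuousOn_harmonicPathDeriv ha hb)

theorem abs_deriv_harmonicPath_sq_rpow_le (ha : 0 < a) (hab : a ≤ b) (hq : 1 ≤ q)
    (ht : t ∈ Icc (0:ℝ) 1) :
    |2 * harmonicPath a b t * harmonicPathDeriv a b t| ^ q ≤
      (2 * a * b * (b - a)) ^ q * harmonicWeight a b q t := by
  have hb : 0 < b := ha.trans_le hab
  have hu := harmonicPath_denom_pos ha hb ht
  have hx := harmonicPath_nonneg ha hb ht
  have hba : 0 ≤ b - a := sub_nonneg.2 hab
  have hsplit : 2 * harmonicPath a b t * harmonicPathDeriv a b t =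
      2 * a * b * (b - a) * harmonicPath a b t * ((b - (b - a) * t) ^ 2)⁻¹ := by
    rw [harmonicPathDeriv]; ring
  have hpow : ((b - (b - a) * t) ^ 2)⁻¹ ^ q = (b - (b - a) * t) ^ (-(2 * q)) := by
    rw [Real.inv_rpow (by positivity), ← Real.rpow_natCast, ← Real.rpow_mul hu.le,
      Real.rpow_neg hu.le, Nat.cast_ofNat]
  rw [hsplit, abs_of_nonneg (by positivity), Real.mul_rpow (by positivity) (by positivity),
    Real.mul_rpow (by positivity) hx, hpow, harmonicWeight, mul_assoc, mul_assoc]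
  gcongr
  exact harmonicPath_rpow_le hq ha hb ht

theorem integral_abs_deriv_harmonicPath_sq_rpow_le (ha : 0 < a) (hab : a ≤ b) (hq : 1 ≤ q)
    {lo hi : ℝ} (hlo : 0 ≤ lo) (hlh : lo ≤ hi) (hhi : hi ≤ 1) :
    (∫ t in lo..hi, |2 * harmonicPath a b t * harmonicPathDeriv a b t| ^ q) ^ (1 / q) ≤
      2 * a * b * (b - a) * (∫ t in lo..hi, harmonicWeight a b q t) ^ (1 / q) := by
  have hb : 0 < b := ha.trans_le hab
  have hsub : Icc lo hi ⊆ Icc 0 1 := Icc_subset_Icc hlo hhi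
  have hq₀ : 0 < q := by linarith
  have hC : 0 ≤ 2 * a * b * (b - a) := by have := sub_nonneg.2 hab; positivity
  have hint : IntervalIntegrable (fun t => |2 * harmonicPath a b t * harmonicPathDeriv a b t| ^ q)
      volume lo hi :=
    ((continuousOn_deriv_harmonicPath_sq ha hb).abs.rpow_const fun _ _ => Or.inr hq₀.le).mono
      hsub |>.intervalIntegrable_of_Icc hlh
  have hintw : IntervalIntegrable (harmonicWeight a b q) volume lo hi :=
    ((continuousOn_harmonicWeight ha hb).mono hsub).intervalIntegrable_of_Icc hlh
  calc (∫ t in lo..hi, |2 * harmonicPath a b t * harmonicPathDeriv a b t| ^ q) ^ (1 / q)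
      ≤ ((2 * a * b * (b - a)) ^ q * ∫ t in lo..hi, harmonicWeight a b q t) ^ (1 / q) := by
        refine Real.rpow_le_rpow (intervalIntegral.integral_nonneg hlh fun _ _ => by positivity) ?_
          (by positivity)
        rw [← intervalIntegral.integral_const_mul]
        exact integral_mono_on hlh hint (hintw.const_mul _) fun t ht =>
          abs_deriv_harmonicPath_sq_rpow_le ha hab hq (hsub ht)
    _ = 2 * a * b * (b - a) * (∫ t in lo..hi, harmonicWeight a b q t) ^ (1 / q) := by
        rw [Real.mul_rpow (by positivity) (integral_harmonicWeight_nonneg ha hb hlo hlh hhi),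
          ← Real.rpow_mul hC, mul_one_div_cancel hq₀.ne', Real.rpow_one]

end HarmonicPath

theorem C4_nonneg {lam p : ℝ} (hl₀ : 0 ≤ lam) (hl₁ : lam ≤ 1) (hp : -1 < p) : 0 ≤ C4 lam p := by
  have := sub_nonneg.2 hl₁
  have : 0 < p + 1 := by linarith
  unfold C4
  positivity

theorem C4_div_two_rpow (lam p : ℝ) (hl₀ : 0 ≤ lam) (hl₁ : lam ≤ 1) :
    C4 lam p / 2 ^ (p + 1) = ((lam / 2) ^ (p + 1) + (1 / 2 - lam / 2) ^ (p + 1)) / (p + 1) := by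
  rw [C4, show 1 / 2 - lam / 2 = (1 - lam) / 2 by ring, Real.div_rpow hl₀ zero_le_two,
    Real.div_rpow (sub_nonneg.2 hl₁) zero_le_two, ← add_div, div_div, div_div, mul_comm]

theorem rpow_one_div_div_two_rpow_add_one {x p : ℝ} (hx : 0 ≤ x) (hp : p ≠ 0) :
    (x / 2 ^ (p + 1)) ^ (1 / p) = x ^ (1 / p) / (2 * 2 ^ (1 / p)) := by
  rw [Real.div_rpow hx (by positivity), ← Real.rpow_mul zero_le_two,
    show (p + 1) * (1 / p) = 1 + 1 / p by field_simp, Real.rpow_add two_pos, Real.rpow_one]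

theorem abs_midpoint_trapezoid_harmonicPath_sq_le {a b lam p q : ℝ} (ha : 0 < a) (hab : a ≤ b)
    (hl₀ : 0 ≤ lam) (hl₁ : lam ≤ 1) (hpq : p.HolderConjugate q) :
    |(1 - lam) * (2 * a * b / (a + b)) ^ 2 + lam * ((a ^ 2 + b ^ 2) / 2) - a * b| ≤
      C4 lam p ^ (1 / p) / (2 * 2 ^ (1 / p)) *
        (2 * a * b * (b - a) * (∫ t in (0:ℝ)..1 / 2, harmonicWeight a b q t) ^ (1 / q) +
          2 * a * b * (b - a) * (∫ t in (1 / 2 : ℝ)..1, harmonicWeight a b q t) ^ (1 / q)) := by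
  have hb : 0 < b := ha.trans_le hab
  have hq : 1 ≤ q := hpq.symm.lt.le
  have key := abs_midpoint_trapezoid_sub_integral_le hpq (c := lam / 2) (by positivity)
    (by linarith) (fun t ht => hasDerivAt_harmonicPath_sq ha hb ht)
    (continuousOn_deriv_harmonicPath_sq ha hb)
  have hC4 : 0 ≤ C4 lam p := C4_nonneg hl₀ hl₁ (by linarith [hpq.pos])
  rw [integral_harmonicPath_sq ha hb, harmonicPath_half, harmonicPath_zero hb.ne',
    harmonicPath_one ha.ne', ← C4_div_two_rpow lam p hl₀ hl₁,
    rpow_one_div_div_two_rpow_add_one hC4 hpq.ne_zero] at key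
  refine (congrArg abs (by ring)).trans_le (key.trans (mul_le_mul_of_nonneg_left (add_le_add
    (integral_abs_deriv_harmonicPath_sq_rpow_le ha hab hq le_rfl (by norm_num) (by norm_num))
    (integral_abs_deriv_harmonicPath_sq_rpow_le ha hab hq (by norm_num) (by norm_num) le_rfl))
    (by positivity)))

theorem prop_means6 (a b : ℝ) (ha : 0 < a) (hab : a < b)
    (lam : ℝ) (hlam : lam ∈ Icc (0:ℝ) 1)
    (p q : ℝ) (hq : 1 < q) (hpq : 1 / p + 1 / q = 1) :
    |(1 - lam) * (2 * a * b / (a + b)) ^ 2 + lam * ((a ^ 2 + b ^ 2) / 2) -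
      Real.sqrt (a * b) ^ 2| ≤
      (a * b * (b - a) * C4 lam p ^ (1 / p) /
          (2 * (((1 - q) * (1 - 2 * q) * (b - a) ^ 2) ^ (1 / q)))) *
        ((C5 q a b * a ^ q + C6 q a b * b ^ q) ^ (1 / q)
          + (C6 q b a * a ^ q + C5 q b a * b ^ q) ^ (1 / q)) := by
  obtain ⟨hl₀, hl₁⟩ := hlam
  have hb : 0 < b := ha.trans hab
  have hpq' : p.HolderConjugate q :=
    (Real.holderConjugate_iff.2 ⟨hq, by simpa only [one_div, add_comm] using hpq⟩).symm
  have hE : 0 < (1 - q) * (1 - 2 * q) * (b - a) ^ 2 :=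
    mul_pos (mul_pos_of_neg_of_neg (by linarith) (by linarith)) (pow_pos (sub_pos.2 hab) 2)
  have h2 : (2:ℝ) ^ (1 / q) = 2 / 2 ^ (1 / p) := by
    rw [eq_div_iff (by positivity), ← Real.rpow_add two_pos, add_comm, hpq, Real.rpow_one]
  rw [Real.sq_sqrt (by positivity), C6_mul_add_C5_mul_eq_integral ha hb hab.ne hq,
    C5_mul_add_C6_mul_eq_integral ha hb hab.ne hq,
    Real.mul_rpow (by positivity) (integral_harmonicWeight_nonneg ha hb le_rfl (by norm_num)
      (by norm_num)),
    Real.mul_rpow (by positivity) (integral_harmonicWeight_nonneg ha hb (by norm_num) (by norm_num)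
      le_rfl),
    Real.mul_rpow zero_le_two hE.le, h2]
  refine (abs_midpoint_trapezoid_harmonicPath_sq_le ha hab.le hl₀ hl₁ hpq').trans_eq ?_
  have : 0 < ((1 - q) * (1 - 2 * q) * (b - a) ^ 2) ^ (1 / q) := by positivity
  generalize ((1 - q) * (1 - 2 * q) * (b - a) ^ 2) ^ (1 / q) = e at this ⊢
  field_simp
  ring
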